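/- arXiv:2605.24684 — 4 statements merged into one kernel-verified Lean document; each statement's English description precedes it below -/
import Mathlib

section
/- Let α ∈ (0,1), β ∈ (0,1], and σ_N² > 0. Define the post-aggregation SNR as SNR_post = (α + (1-α)β)² · S / (α² σ_ε² + (1-α)² σ_N²) and the intrinsic SNR as SNR_int = S / σ_ε², where S > 0 and σ_ε² > 0. Define the threshold τ(β) = (1-α) σ_N² / (β(2α + (1-α)β)). Then SNR_post < SNR_int if and only if σ_ε² < τ(β). -/
/-!
Clearing the positive denominators and the factor `S`, the comparison becomes
`(α + (1-α)β)² σε² < α² σε² + (1-α)² σN²`. Since `(α + (1-α)β)² - α² = (1-α) β (2α + (1-α)β)`,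
this is linear in `σε²`, and cancelling the positive factor `1 - α` leaves `σε² < τ(β)`.
-/

lemma mul_div_lt_div_iff_mul_lt {a S D e : ℝ} (hS : 0 < S) (hD : 0 < D) (he : 0 < e) :
    a * S / D < S / e ↔ a * e < D := by
  rw [div_lt_div_iff₀ hD he, mul_right_comm, mul_comm S D]
  exact mul_lt_mul_iff_left₀ hS

lemma sq_add_one_sub_mul_sub_sq (α β : ℝ) :
    (α + (1-α)*β)^2 - α^2 = (1-α) * (β * (2*α + (1-α)*β)) := by
  ring

theorem snr_crossover (α β S σε2 σN2 : ℝ)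
    (hα : α ∈ Set.Ioo (0:ℝ) 1) (hβ : β ∈ Set.Ioc (0:ℝ) 1)
    (hS : 0 < S) (hσε : 0 < σε2) (hσN : 0 < σN2) :
    (α + (1-α)*β)^2 * S / (α^2 * σε2 + (1-α)^2 * σN2) < S / σε2 ↔
      σε2 < (1-α) * σN2 / (β * (2*α + (1-α)*β)) := by
  obtain ⟨hα0, hα1⟩ := hα
  have h1α : 0 < 1 - α := sub_pos.mpr hα1
  have hD : 0 < α^2 * σε2 + (1-α)^2 * σN2 := by positivity
  have hc : 0 < β * (2*α + (1-α)*β) := by have := hβ.1; positivity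
  calc _ ↔ (α + (1-α)*β)^2 * σε2 < α^2 * σε2 + (1-α)^2 * σN2 :=
        mul_div_lt_div_iff_mul_lt hS hD hσε
    _ ↔ (1-α) * (σε2 * (β * (2*α + (1-α)*β))) < (1-α) * ((1-α) * σN2) := by
        rw [← sub_lt_iff_lt_add', ← sub_mul, sq_add_one_sub_mul_sub_sq]
        ring_nf
    _ ↔ σε2 * (β * (2*α + (1-α)*β)) < (1-α) * σN2 := mul_lt_mul_iff_right₀ h1α
    _ ↔ σε2 < (1-α) * σN2 / (β * (2*α + (1-α)*β)) := (lt_div_iff₀ hc).symm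
end

section
/- Let α ∈ (0,1), β ∈ (0,1], S > 0, σ_N² > 0, and suppose σ_ε² > τ(β) := (1-α)σ_N² / (β(2α + (1-α)β)). Then SNR_post = (α + (1-α)β)² S / (α² σ_ε² + (1-α)² σ_N²) satisfies SNR_post > SNR_int = S / σ_ε². -/
/-! Clearing denominators, the gain `(α + (1-α)β)² σ_ε² - (α² σ_ε² + (1-α)² σ_N²)` factors as
`(1-α) (β (2α + (1-α)β) σ_ε² - (1-α) σ_N²)`, whose second factor is positive exactly when
`σ_ε²` exceeds the threshold `τ(β)`. -/

lemma aggregation_gain_eq (α β σε2 σN2 : ℝ) :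
    (α + (1-α)*β)^2 * σε2 - (α^2 * σε2 + (1-α)^2 * σN2) =
      (1-α) * (β * (2*α + (1-α)*β) * σε2 - (1-α) * σN2) := by
  ring

lemma aggregated_noise_lt {α β σε2 σN2 : ℝ} (hα : α < 1) (hden : 0 < β * (2*α + (1-α)*β))
    (hσε : (1-α) * σN2 / (β * (2*α + (1-α)*β)) < σε2) :
    α^2 * σε2 + (1-α)^2 * σN2 < (α + (1-α)*β)^2 * σε2 := by
  have hgap : 0 < β * (2*α + (1-α)*β) * σε2 - (1-α) * σN2 := by
    rw [div_lt_iff₀ hden] at hσε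
    linarith
  linarith [aggregation_gain_eq α β σε2 σN2, mul_pos (sub_pos.mpr hα) hgap]

lemma div_lt_mul_div_of_lt_mul {S a b c : ℝ} (hS : 0 < S) (ha : 0 < a) (hb : 0 < b)
    (h : b < c * a) : S / a < c * S / b := by
  rw [div_lt_div_iff₀ ha hb]
  calc S * b < S * (c * a) := mul_lt_mul_of_pos_left h hS
    _ = c * S * a := by ring

theorem snr_improvement (α β S σε2 σN2 : ℝ)
    (hα : α ∈ Set.Ioo (0:ℝ) 1) (hβ : β ∈ Set.Ioc (0:ℝ) 1)
    (hS : 0 < S) (hσN : 0 < σN2)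
    (hσε : (1-α) * σN2 / (β * (2*α + (1-α)*β)) < σε2) :
    S / σε2 < (α + (1-α)*β)^2 * S / (α^2 * σε2 + (1-α)^2 * σN2) := by
  obtain ⟨hα0, hα1⟩ := hα
  have h1α : 0 < 1 - α := sub_pos.mpr hα1
  have hden : 0 < β * (2*α + (1-α)*β) := by
    have := hβ.1
    positivity
  have hσε0 : 0 < σε2 := lt_trans (by positivity) hσε
  have hnoise : 0 < α^2 * σε2 + (1-α)^2 * σN2 := by positivity
  exact div_lt_mul_div_of_lt_mul hS hσε0 hnoise (aggregated_noise_lt hα1 hden hσε)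
end

section
/- Let α ∈ (0,1), β ∈ (0,1], S > 0, σ_N² > 0. Viewed as a function of σ_ε² > 0, the difference D(σ_ε²) = SNR_post(σ_ε²) - SNR_int(σ_ε²), where SNR_post = (α+(1-α)β)² S / (α² σ_ε² + (1-α)² σ_N²) and SNR_int = S/σ_ε², has exactly one zero on (0, ∞), located at σ_ε² = τ(β) = (1-α)σ_N² / (β(2α+(1-α)β)). -/
/-! Clearing the (positive) denominators, `SNR_post = SNR_int` becomes
`(α + (1-α)β)² σε² = α² σε² + (1-α)² σN²`. Since
`(α + (1-α)β)² - α² = (1-α) β (2α + (1-α)β)`, this is a linear equation in `σε²` whose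
coefficient is positive, hence it has the single root `τ(β)`. -/

lemma snr_cross_mul_sub_eq (α β S σN2 x : ℝ) :
    (α + (1-α)*β)^2 * S * x - S * (α^2 * x + (1-α)^2 * σN2) =
      S * (1-α) * (x * (β * (2*α + (1-α)*β)) - (1-α) * σN2) := by
  ring

lemma crossover_coeff_pos {α β : ℝ} (hα : α ∈ Set.Ioo (0:ℝ) 1) (hβ : 0 < β) :
    0 < β * (2*α + (1-α)*β) := by
  have h1α : 0 < 1 - α := sub_pos.mpr hα.2
  have := hα.1
  positivity

theorem snr_unique_crossover (α β S σN2 : ℝ)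
    (hα : α ∈ Set.Ioo (0:ℝ) 1) (hβ : β ∈ Set.Ioc (0:ℝ) 1)
    (hS : 0 < S) (hσN : 0 < σN2) :
    ∀ σε2 : ℝ, 0 < σε2 →
      ((α + (1-α)*β)^2 * S / (α^2 * σε2 + (1-α)^2 * σN2) - S / σε2 = 0 ↔
        σε2 = (1-α) * σN2 / (β * (2*α + (1-α)*β))) := by
  intro σε2 hε
  have h1α : 0 < 1 - α := sub_pos.mpr hα.2
  have hden : 0 < α^2 * σε2 + (1-α)^2 * σN2 := by positivity
  rw [sub_eq_zero, div_eq_div_iff hden.ne' hε.ne', eq_div_iff (crossover_coeff_pos hα hβ.1).ne',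
    ← sub_eq_zero, snr_cross_mul_sub_eq, mul_eq_zero, sub_eq_zero,
    or_iff_right (mul_pos hS h1α).ne']
end

section
/- Let α ∈ (0,1), β ∈ (0,1], σ_N² > 0, S > 0, and σ_ε² > 0 with σ_ε² < τ(β) = (1-α)σ_N²/(β(2α+(1-α)β)). Then the SNR degradation factor satisfies SNR_post/SNR_int = ((α+(1-α)β)² σ_ε²) / (α² σ_ε² + (1-α)² σ_N²) < 1, and this ratio is strictly increasing in σ_ε² on (0, ∞). -/
theorem snr_degradation_factor (α β S σN2 σε2 : ℝ)
    (hα : α ∈ Set.Ioo (0:ℝ) 1) (hβ : β ∈ Set.Ioc (0:ℝ) 1)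
    (hσN : 0 < σN2) (hS : 0 < S) (hσε : 0 < σε2)
    (hlt : σε2 < (1-α) * σN2 / (β * (2*α + (1-α)*β))) :
    ((α+(1-α)*β)^2 * S / (α^2*σε2 + (1-α)^2*σN2)) / (S / σε2) =
      ((α+(1-α)*β)^2 * σε2) / (α^2*σε2 + (1-α)^2*σN2) ∧
    ((α+(1-α)*β)^2 * σε2) / (α^2*σε2 + (1-α)^2*σN2) < 1 ∧
    StrictMonoOn (fun s : ℝ => ((α+(1-α)*β)^2 * s) / (α^2*s + (1-α)^2*σN2))
      (Set.Ioi 0) := by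
  obtain ⟨hα0, hα1⟩ := hα
  obtain ⟨hβ0, hβ1⟩ := hβ
  have h1α : (0:ℝ) < 1 - α := by linarith
  have hden : 0 < α^2*σε2 + (1-α)^2*σN2 := by positivity
  have hdenom : 0 < β * (2*α + (1-α)*β) := by positivity
  have hlt' : σε2 * (β * (2*α + (1-α)*β)) < (1-α) * σN2 :=
    (lt_div_iff₀ hdenom).mp hlt
  refine ⟨?_, ?_, ?_⟩
  · field_simp
  · rw [div_lt_one hden]
    nlinarith [sq_nonneg α, mul_pos h1α hσN]
  · intro x hx y hy hxy
    simp only [Set.mem_Ioi] at hx hy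
    have hdx : 0 < α^2*x + (1-α)^2*σN2 := by positivity
    have hdy : 0 < α^2*y + (1-α)^2*σN2 := by positivity
    have hA : 0 < (α+(1-α)*β)^2 := by positivity
    rw [div_lt_div_iff₀ hdx hdy]
    nlinarith [mul_pos (mul_pos hA (mul_pos (mul_pos h1α h1α) hσN)) (sub_pos.mpr hxy)]
end
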